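/- Let Γ be a group acting on a set Z, G₁ and G₂ subgroups of Γ, and J a subgroup of G₁ ∩ G₂. Let B₁, B₂ ⊆ Z satisfy Z = B₁ ∪ B₂, set X_m = Z ∖ B_{3−m}, and assume j • B_m = B_m for every j ∈ J and, for every g ∈ G_m∖J, both g • B_m ⊆ B_{3−m} and g • X_m ⊆ X_{3−m} (m ∈ {1,2}). Define T₁ = (⋃_{g ∈ G₁∖J} g • B₁) ∪ (⋃_{g ∈ G₂∖J} g • B₂) and C₁ = Z ∖ T₁. Then for each m ∈ {1,2}: C₁ ∩ X_m = Z ∖ (⋃_{g ∈ G_{3−m}} g • B_{3−m}), and C₁ ∩ X_m is precisely invariant under G_{3−m} in the subgroup ⟨G₁, G₂⟩ generated by G₁ and G₂; that is, γ • (C₁ ∩ X_m) = C₁ ∩ X_m for every γ ∈ G_{3−m}, and γ • (C₁ ∩ X_m) ∩ (C₁ ∩ X_m) = ∅ for every γ ∈ ⟨G₁, G₂⟩ ∖ G_{3−m}. -/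

import Mathlib

/-! Every element of `G true ⊔ G false` outside `J` is a reduced alternating product
`g₁ g₂ ⋯ gₖ` of letters (elements of some `G m` not in `J`, with alternating factors).
By ping-pong, such a product maps the complement of `S n = ⋃ g ∈ G n, g • B n` into
`B (!t)`, where `t` is the factor of `g₁`. So if the product is not in `G n`, it maps `(S n)ᶜ`
into `S n`: if `t ≠ n` the image lies in `B n ⊆ S n`; if `t = n`, then `k ≥ 2`, the tail
`g₂ ⋯ gₖ` maps `(S n)ᶜ` into `B n`, and `g₁ • B n ⊆ S n`.
Finally `C₁ ∩ X m = (S (!m))ᶜ`, which is `G (!m)`-invariant since `S (!m)` is. -/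

open Pointwise

/-- `x` is a letter of factor `m`: it belongs to `G m` but not to `J`. -/
def NFLetter {Γ : Type*} [Group Γ] (G : Bool → Subgroup Γ) (J : Subgroup Γ)
    (m : Bool) (x : Γ) : Prop :=
  x ∈ G m ∧ x ∉ J

section ReducedProduct

variable {Γ : Type*} [Group Γ] (G : Bool → Subgroup Γ) (J : Subgroup Γ)

inductive IsReducedProd : Bool → Γ → Prop
  | letter {t : Bool} {g : Γ} : NFLetter G J t g → IsReducedProd t g
  | cons {t : Bool} {g γ : Γ} : NFLetter G J t g → IsReducedProd (!t) γ →
      IsReducedProd t (g * γ)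

variable {G J}

theorem NFLetter.mul_left {t : Bool} {g j : Γ} (hJ : J ≤ G t) (hj : j ∈ J)
    (hg : NFLetter G J t g) : NFLetter G J t (j * g) :=
  ⟨mul_mem (hJ hj) hg.1, fun h => hg.2 (by simpa using mul_mem (inv_mem hj) h)⟩

theorem IsReducedProd.mul_left_of_mem {t : Bool} {j γ : Γ} (hJ : ∀ m, J ≤ G m)
    (hj : j ∈ J) : IsReducedProd G J t γ → IsReducedProd G J t (j * γ)
  | letter hg => letter (hg.mul_left (hJ _) hj)
  | cons hg hγ => by
    rw [← mul_assoc]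
    exact cons (hg.mul_left (hJ _) hj) hγ

theorem IsReducedProd.mul_left {s t : Bool} {x γ : Γ} (hJ : ∀ m, J ≤ G m) (hx : x ∈ G s)
    (hγ : IsReducedProd G J t γ) : x * γ ∈ J ∨ ∃ t', IsReducedProd G J t' (x * γ) := by
  by_cases hxJ : x ∈ J
  · exact Or.inr ⟨t, hγ.mul_left_of_mem hJ hxJ⟩
  obtain rfl | rfl : s = t ∨ s = !t := by cases s <;> cases t <;> simp
  · cases hγ with
    | letter hg =>
      by_cases hxg : x * γ ∈ J
      · exact Or.inl hxg
      · exact Or.inr ⟨s, letter ⟨mul_mem hx hg.1, hxg⟩⟩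
    | @cons _ g γ' hg hγ' =>
      rw [← mul_assoc]
      by_cases hxg : x * g ∈ J
      · exact Or.inr ⟨!s, hγ'.mul_left_of_mem hJ hxg⟩
      · exact Or.inr ⟨s, cons ⟨mul_mem hx hg.1, hxg⟩ hγ'⟩
  · exact Or.inr ⟨!t, cons ⟨hx, hxJ⟩ (by simpa using hγ)⟩

theorem mem_or_isReducedProd_mul {s : Bool} {x γ : Γ} (hJ : ∀ m, J ≤ G m) (hx : x ∈ G s)
    (hγ : γ ∈ J ∨ ∃ t, IsReducedProd G J t γ) :
    x * γ ∈ J ∨ ∃ t, IsReducedProd G J t (x * γ) := by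
  rcases hγ with hγJ | ⟨t, hγ⟩
  · by_cases hxγ : x * γ ∈ J
    · exact Or.inl hxγ
    · exact Or.inr ⟨s, .letter ⟨mul_mem hx (hJ s hγJ), hxγ⟩⟩
  · exact hγ.mul_left hJ hx

theorem mem_or_isReducedProd_of_mem_sup {γ : Γ} (hJ : ∀ m, J ≤ G m)
    (hγ : γ ∈ G true ⊔ G false) : γ ∈ J ∨ ∃ t, IsReducedProd G J t γ := by
  rw [← Subgroup.closure_eq (G true), ← Subgroup.closure_eq (G false),
    ← Subgroup.closure_union] at hγ
  induction hγ using Subgroup.closure_induction_left with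
  | one => exact Or.inl J.one_mem
  | mul_left x hx y _ ih =>
    obtain ⟨s, hs⟩ : ∃ s, x ∈ G s := hx.elim (⟨true, ·⟩) (⟨false, ·⟩)
    exact mem_or_isReducedProd_mul hJ hs ih
  | inv_mul_cancel x hx y _ ih =>
    obtain ⟨s, hs⟩ : ∃ s, x ∈ G s := hx.elim (⟨true, ·⟩) (⟨false, ·⟩)
    exact mem_or_isReducedProd_mul hJ (inv_mem hs) ih

end ReducedProduct

section PingPong

variable {Γ : Type*} [Group Γ] {G : Bool → Subgroup Γ} {J : Subgroup Γ}
  {Z : Type*} [MulAction Γ Z] {B : Bool → Set Z}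

theorem subset_biUnion_smul (H : Subgroup Γ) (s : Set Z) : s ⊆ ⋃ h ∈ H, h • s := by
  simpa using Set.subset_biUnion_of_mem (u := fun h : Γ => h • s) H.one_mem

theorem smul_biUnion_smul_of_mem {H : Subgroup Γ} {γ : Γ} (s : Set Z) (hγ : γ ∈ H) :
    γ • ⋃ h ∈ H, h • s = ⋃ h ∈ H, h • s := by
  simp only [← SetLike.mem_coe, Set.iUnion_smul_left_image]
  rw [← smul_assoc, smul_coe_set hγ]

theorem compl_subset_not (hcover : B true ∪ B false = Set.univ) :
    ∀ n, (B n)ᶜ ⊆ B (!n)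
  | true => Set.compl_subset_iff_union.2 hcover
  | false => Set.compl_subset_iff_union.2 (Set.union_comm _ _ ▸ hcover)

theorem IsReducedProd.smul_compl_subset (hcover : B true ∪ B false = Set.univ)
    (hmapB : ∀ m, ∀ g : Γ, NFLetter G J m g → g • B m ⊆ B (!m)) {n t : Bool} {γ : Γ}
    (hγ : IsReducedProd G J t γ) : γ • (⋃ g ∈ G n, g • B n)ᶜ ⊆ B (!t) := by
  induction hγ with
  | @letter t g hg =>
    rintro _ ⟨z, hz, rfl⟩
    have hzB : z ∉ B n := fun h => hz (subset_biUnion_smul _ _ h)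
    by_cases htn : t = n
    · subst htn
      refine compl_subset_not hcover t fun h => hz ?_
      exact Set.mem_biUnion (inv_mem hg.1) (Set.mem_inv_smul_set_iff.2 h)
    · have hnt : n = !t := by cases n <;> cases t <;> simp_all
      subst hnt
      exact hmapB t g hg ⟨z, by simpa using compl_subset_not hcover _ hzB, rfl⟩
  | @cons t g γ hg _ ih =>
    rw [mul_smul]
    exact (Set.smul_set_mono ih).trans (by simpa using hmapB t g hg)

theorem smul_compl_subset_of_notMem (hJ : ∀ m, J ≤ G m)
    (hcover : B true ∪ B false = Set.univ)
    (hmapB : ∀ m, ∀ g : Γ, NFLetter G J m g → g • B m ⊆ B (!m)) {n : Bool} {γ : Γ}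
    (hγ : γ ∈ G true ⊔ G false) (hγn : γ ∉ G n) :
    γ • (⋃ g ∈ G n, g • B n)ᶜ ⊆ ⋃ g ∈ G n, g • B n := by
  obtain hγJ | ⟨t, hred⟩ := mem_or_isReducedProd_of_mem_sup hJ hγ
  · exact absurd (hJ n hγJ) hγn
  obtain rfl | rfl : t = n ∨ t = !n := by cases t <;> cases n <;> simp
  · cases hred with
    | letter hg => exact absurd hg.1 hγn
    | @cons _ g γ' hg hred' =>
      rw [mul_smul]
      refine (Set.smul_set_mono ?_).trans (Set.subset_biUnion_of_mem (u := (· • B t)) hg.1)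
      simpa using hred'.smul_compl_subset hcover hmapB
  · have hmap : γ • (⋃ g ∈ G n, g • B n)ᶜ ⊆ B n := by
      simpa using hred.smul_compl_subset hcover hmapB
    exact hmap.trans (subset_biUnion_smul _ _)

theorem iUnion_letter_smul_union_eq
    (hinv : ∀ m, ∀ j ∈ J, j • B m = B m)
    (hmapB : ∀ m, ∀ g : Γ, NFLetter G J m g → g • B m ⊆ B (!m)) (m : Bool) :
    (⋃ (k : Bool) (g : Γ) (_ : NFLetter G J k g), g • B k) ∪ B (!m) =
      ⋃ g ∈ G (!m), g • B (!m) := by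
  refine subset_antisymm (Set.union_subset ?_ (subset_biUnion_smul _ _)) ?_
  · refine Set.iUnion_subset fun k => Set.iUnion₂_subset fun g hg => ?_
    obtain rfl | rfl : k = !m ∨ k = m := by cases k <;> cases m <;> simp
    · exact Set.subset_biUnion_of_mem (u := (· • B (!m))) hg.1
    · exact (hmapB k g hg).trans (subset_biUnion_smul _ _)
  · refine Set.iUnion₂_subset fun g hg => ?_
    by_cases hgJ : g ∈ J
    · rw [hinv _ g hgJ]
      exact Set.subset_union_right
    · exact fun z hz => Or.inl (Set.mem_iUnion.2 ⟨!m, Set.mem_iUnion₂.2 ⟨g, ⟨hg, hgJ⟩, hz⟩⟩)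

end PingPong

theorem stmt10_general {Γ : Type*} [Group Γ] {Z : Type*} [MulAction Γ Z]
    (G : Bool → Subgroup Γ) (J : Subgroup Γ) (hJ : ∀ m, J ≤ G m)
    (B : Bool → Set Z) (hcover : B true ∪ B false = Set.univ)
    (X : Bool → Set Z) (hX : ∀ m, X m = (B (!m))ᶜ)
    (hinv : ∀ m, ∀ j ∈ J, j • B m = B m)
    (hmapB : ∀ m, ∀ g : Γ, NFLetter G J m g → g • B m ⊆ B (!m))
    (T₁ : Set Z) (hT₁ : T₁ = ⋃ (m : Bool) (g : Γ) (_ : NFLetter G J m g), g • B m)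
    (C₁ : Set Z) (hC₁ : C₁ = T₁ᶜ) :
    ∀ m : Bool,
      C₁ ∩ X m = (⋃ g ∈ G (!m), g • B (!m))ᶜ ∧
      (∀ γ ∈ G (!m), γ • (C₁ ∩ X m) = C₁ ∩ X m) ∧
      (∀ γ ∈ G true ⊔ G false, γ ∉ G (!m) →
        (γ • (C₁ ∩ X m)) ∩ (C₁ ∩ X m) = ∅) := by
  intro m
  have hC : C₁ ∩ X m = (⋃ g ∈ G (!m), g • B (!m))ᶜ := by
    rw [hC₁, hX, ← Set.compl_union, hT₁, iUnion_letter_smul_union_eq hinv hmapB]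
  refine ⟨hC, fun γ hγ => ?_, fun γ hγ hγn => ?_⟩
  · rw [hC, Set.smul_set_compl, smul_biUnion_smul_of_mem _ hγ]
  · rw [hC, ← Set.disjoint_iff_inter_eq_empty, Set.disjoint_compl_right_iff_subset]
    exact smul_compl_subset_of_notMem hJ hcover hmapB hγ hγn

theorem stmt10 {Γ : Type*} [Group Γ] {Z : Type*} [MulAction Γ Z]
    (G : Bool → Subgroup Γ) (J : Subgroup Γ) (hJ : ∀ m, J ≤ G m)
    (B : Bool → Set Z) (hcover : B true ∪ B false = Set.univ)
    (X : Bool → Set Z) (hX : ∀ m, X m = (B (!m))ᶜ)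
    (hinv : ∀ m, ∀ j ∈ J, j • B m = B m)
    (hmapB : ∀ m, ∀ g : Γ, NFLetter G J m g → g • B m ⊆ B (!m))
    (hmapX : ∀ m, ∀ g : Γ, NFLetter G J m g → g • X m ⊆ X (!m))
    (T₁ : Set Z) (hT₁ : T₁ = ⋃ (m : Bool) (g : Γ) (_ : NFLetter G J m g), g • B m)
    (C₁ : Set Z) (hC₁ : C₁ = T₁ᶜ) :
    ∀ m : Bool,
      C₁ ∩ X m = (⋃ g ∈ G (!m), g • B (!m))ᶜ ∧
      (∀ γ ∈ G (!m), γ • (C₁ ∩ X m) = C₁ ∩ X m) ∧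
      (∀ γ ∈ G true ⊔ G false, γ ∉ G (!m) →
        (γ • (C₁ ∩ X m)) ∩ (C₁ ∩ X m) = ∅) :=
  stmt10_general G J hJ B hcover X hX hinv hmapB T₁ hT₁ C₁ hC₁
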